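/- arXiv:1805.00401 — 4 statements merged into one kernel-verified Lean document; each statement's English description precedes it below -/
import Mathlib

section
/- Let L be a complete lattice and let F : L → L be an arbitrary function (no monotonicity assumption). Define the Mendler-style pre-fixed point μF := sInf {C : L | ∀ X : L, X ≤ C → F X ≤ C}. Then F (μF) ≤ μF. -/
theorem mendler_prefixed_sound {L : Type*} [CompleteLattice L] (F : L → L) :
    F (sInf {C : L | ∀ X : L, X ≤ C → F X ≤ C}) ≤
      sInf {C : L | ∀ X : L, X ≤ C → F X ≤ C} :=
  le_sInf fun _ hC => hC _ (sInf_le hC)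
end

section
/- Let L be a complete lattice and let F : L → L be an arbitrary function (no monotonicity assumption). Define the Mendler-style post-fixed point νF := sSup {C : L | ∀ X : L, C ≤ X → C ≤ F X}. Then νF ≤ F (νF). -/
theorem mendler_postfixed_sound {L : Type*} [CompleteLattice L] (F : L → L) :
    sSup {C : L | ∀ X : L, C ≤ X → C ≤ F X} ≤
      F (sSup {C : L | ∀ X : L, C ≤ X → C ≤ F X}) :=
  sSup_le fun _ hC => hC _ (le_sSup hC)
end

section
/- Let L be a complete lattice and F : L → L an arbitrary function. Then μF := sInf {C : L | ∀ X : L, X ≤ C → F X ≤ C} is itself a member of the set {C : L | ∀ X : L, X ≤ C → F X ≤ C}; that is, for every X : L with X ≤ μF one has F X ≤ μF. -/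
theorem mendler_mu_mem {L : Type*} [CompleteLattice L] (F : L → L) :
    sInf {C : L | ∀ X : L, X ≤ C → F X ≤ C} ∈ {C : L | ∀ X : L, X ≤ C → F X ≤ C} :=
  fun X hX => le_sInf fun _ hC => hC X (hX.trans (sInf_le hC))
end

section
/- Let M and N be index terms of the natural-number index language. If M and N have a unifier, then they have a most general unifier: there exists a substitution σ such that subst σ M = subst σ N, and for every substitution τ with subst τ M = subst τ N there exists a substitution ρ with τ v = subst ρ (σ v) for all variables v. -/
/-!
Terms of this index language are first-order terms, so Robinson's argument applies: peel matching
`succ`s off both sides; once one side is a variable `u`, either `u` does not occur in the other side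
`t`, and then `u ↦ t` is most general, or it does, and then a size count shows that only `t = var u`
is unifiable.
-/

inductive Tm (V : Type) where
  | var : V → Tm V
  | zero : Tm V
  | succ : Tm V → Tm V

def subst {V : Type} (θ : V → Tm V) : Tm V → Tm V
  | .var u => θ u
  | .zero => .zero
  | .succ M => .succ (subst θ M)

variable {V : Type}

def Tm.Occurs (u : V) : Tm V → Prop
  | .var w => w = u
  | .zero => False
  | .succ t => t.Occurs u

@[simp]
theorem subst_var (t : Tm V) : subst Tm.var t = t := by
  induction t with
  | var w => rfl
  | zero => rfl
  | succ t ih => exact congrArg Tm.succ ih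

theorem subst_update_of_not_occurs [DecidableEq V] (θ : V → Tm V) {u : V} {t : Tm V}
    (s : Tm V) (hu : ¬ t.Occurs u) : subst (Function.update θ u s) t = subst θ t := by
  induction t with
  | var w => exact Function.update_of_ne hu s θ
  | zero => rfl
  | succ t ih => exact congrArg Tm.succ (ih hu)

theorem sizeOf_le_sizeOf_subst_of_occurs (θ : V → Tm V) {u : V} {t : Tm V} (hu : t.Occurs u) :
    sizeOf (θ u) ≤ sizeOf (subst θ t) := by
  induction t with
  | var w => cases hu; exact le_rfl
  | zero => exact hu.elim
  | succ t ih => simp only [subst, Tm.succ.sizeOf_spec]; exact (ih hu).trans (by omega)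

theorem eq_var_of_occurs_of_subst_eq {θ : V → Tm V} {u : V} {t : Tm V} (hu : t.Occurs u)
    (hθ : θ u = subst θ t) : t = .var u := by
  cases t with
  | var w => cases hu; rfl
  | zero => exact hu.elim
  | succ t =>
    have hsize := sizeOf_le_sizeOf_subst_of_occurs θ (t := t) hu
    rw [hθ, subst, Tm.succ.sizeOf_spec] at hsize
    omega

def IsMostGeneralUnifier (σ : V → Tm V) (M N : Tm V) : Prop :=
  subst σ M = subst σ N ∧
    ∀ τ : V → Tm V, subst τ M = subst τ N → ∃ ρ : V → Tm V, ∀ v : V, τ v = subst ρ (σ v)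

namespace IsMostGeneralUnifier

theorem symm {σ : V → Tm V} {M N : Tm V} (h : IsMostGeneralUnifier σ M N) :
    IsMostGeneralUnifier σ N M :=
  ⟨h.1.symm, fun τ hτ => h.2 τ hτ.symm⟩

theorem of_succ {σ : V → Tm V} {M N : Tm V} (h : IsMostGeneralUnifier σ M N) :
    IsMostGeneralUnifier σ (.succ M) (.succ N) :=
  ⟨congrArg Tm.succ h.1, fun τ hτ => h.2 τ (Tm.succ.inj hτ)⟩

theorem var_self (M : Tm V) : IsMostGeneralUnifier Tm.var M M :=
  ⟨rfl, fun τ _ => ⟨τ, fun _ => rfl⟩⟩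

theorem update_var [DecidableEq V] {u : V} {t : Tm V} (hu : ¬ t.Occurs u) :
    IsMostGeneralUnifier (Function.update Tm.var u t) (.var u) t := by
  refine ⟨by simp [subst, subst_update_of_not_occurs _ _ hu], fun τ hτ => ⟨τ, fun v => ?_⟩⟩
  rcases eq_or_ne v u with rfl | hv
  · simpa [subst] using hτ
  · rw [Function.update_of_ne hv]; rfl

end IsMostGeneralUnifier

theorem exists_isMostGeneralUnifier_var [DecidableEq V] {u : V} {t : Tm V}
    (h : ∃ θ : V → Tm V, θ u = subst θ t) : ∃ σ, IsMostGeneralUnifier σ (.var u) t := by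
  by_cases hu : t.Occurs u
  · obtain ⟨θ, hθ⟩ := h
    rw [eq_var_of_occurs_of_subst_eq hu hθ]
    exact ⟨_, .var_self _⟩
  · exact ⟨_, .update_var hu⟩

theorem mgu_exists {V : Type} [DecidableEq V] (M N : Tm V)
    (h : ∃ θ : V → Tm V, subst θ M = subst θ N) :
    ∃ σ : V → Tm V, subst σ M = subst σ N ∧
      ∀ τ : V → Tm V, subst τ M = subst τ N →
        ∃ ρ : V → Tm V, ∀ v : V, τ v = subst ρ (σ v) := by
  show ∃ σ, IsMostGeneralUnifier σ M N
  have exists_symm {M N : Tm V} (h : ∃ σ, IsMostGeneralUnifier σ N M) :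
      ∃ σ, IsMostGeneralUnifier σ M N :=
    h.imp fun _ => .symm
  obtain ⟨θ, hθ⟩ := h
  induction M generalizing N with
  | var u => exact exists_isMostGeneralUnifier_var ⟨θ, hθ⟩
  | zero =>
    cases N with
    | var w => exact exists_symm (exists_isMostGeneralUnifier_var ⟨θ, hθ.symm⟩)
    | zero => exact ⟨_, .var_self _⟩
    | succ N => cases hθ
  | succ M ih =>
    cases N with
    | var w => exact exists_symm (exists_isMostGeneralUnifier_var ⟨θ, hθ.symm⟩)
    | zero => cases hθ
    | succ N => exact (ih N (Tm.succ.inj hθ)).imp fun _ => .of_succ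
end
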